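/- Let d be a Floer-type differential on C admitting a singular decomposition with r ≥ 1, and let β_min be its minimal bar. Then β_min = inf{ A(ȳ) − A(x̄) : x̄, ȳ capped orbits with ⟨d x̄, ȳ⟩ = 1 } = inf{ A(d ξ) − A(ξ) : ξ ∈ C, d ξ ≠ 0 }. -/

import Mathlib

/-!  Common setup: `Λ := LaurentSeries (ZMod 2)`, `C := Fin n → Λ`, the action
functional `A`, orthogonality, capped orbits, the pairing `⟨d x̄, ȳ⟩`,
Floer-type differentials and singular decompositions. -/

noncomputable section

/-- The Novikov field `Λ = 𝔽₂((q))`, realized as formal Laurent series over `ZMod 2`. -/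
abbrev Lam : Type := LaurentSeries (ZMod 2)

open Classical in
/-- The action `A : C → ℝ ∪ {+∞}`: `A 0 = ⊤` and for `ξ ≠ 0`,
`A ξ = min { a i + λ₀ • ord (ξ i) | ξ i ≠ 0 }`. -/
def actA (n : ℕ) (lam0 : ℝ) (a : Fin n → ℝ) (xi : Fin n → Lam) : WithTop ℝ :=
  Finset.univ.inf fun i : Fin n =>
    if xi i = 0 then (⊤ : WithTop ℝ)
    else ((a i + lam0 * ((xi i).order : ℝ) : ℝ) : WithTop ℝ)

/-- A finite family `(ξ j)` of vectors of `C` is orthogonal if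
`A (∑ λ_j • ξ_j) = min_j A (λ_j • ξ_j)` for all coefficients `λ_j ∈ Λ`. -/
def IsOrthogonalFamily (n : ℕ) (lam0 : ℝ) (a : Fin n → ℝ) {ι : Type} [Fintype ι]
    (xi : ι → (Fin n → Lam)) : Prop :=
  ∀ c : ι → Lam,
    actA n lam0 a (∑ j, c j • xi j) = Finset.univ.inf fun j => actA n lam0 a (c j • xi j)

/-- The capped orbit `q^k eᵢ`. -/
def cappedOrbit (n : ℕ) (i : Fin n) (k : ℤ) : Fin n → Lam :=
  Pi.single i (HahnSeries.single k 1)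

/-- `⟨d x̄, ȳ⟩ ∈ 𝔽₂` for `x̄ = q^k eᵢ` and `ȳ = q^l eⱼ`: the `(l - k)`-th Laurent
coefficient of the `j`-th component of `d eᵢ`. -/
def pairing (n : ℕ) (d : (Fin n → Lam) →ₗ[Lam] (Fin n → Lam)) (i j : Fin n) (k l : ℤ) :
    ZMod 2 :=
  ((d (Pi.single i 1)) j).coeff (l - k)

/-- The set of arrow lengths `A ȳ - A x̄` over pairs of capped orbits with `⟨d x̄, ȳ⟩ = 1`. -/
def arrowLengths (n : ℕ) (lam0 : ℝ) (a : Fin n → ℝ)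
    (d : (Fin n → Lam) →ₗ[Lam] (Fin n → Lam)) : Set ℝ :=
  {t : ℝ | ∃ (i j : Fin n) (k l : ℤ),
    pairing n d i j k l = 1 ∧ t = (a j + lam0 * l) - (a i + lam0 * k)}

/-- The set of values `A (d ξ) - A ξ` over `ξ ∈ C` with `d ξ ≠ 0`. -/
def actionGaps (n : ℕ) (lam0 : ℝ) (a : Fin n → ℝ)
    (d : (Fin n → Lam) →ₗ[Lam] (Fin n → Lam)) : Set ℝ :=
  {t : ℝ | ∃ xi : Fin n → Lam, d xi ≠ 0 ∧
    actA n lam0 a (d xi) = actA n lam0 a xi + (t : WithTop ℝ)}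

/-- A Floer-type differential on `C`: a `Λ`-linear map squaring to zero that strictly
increases the action. -/
def IsFloerDifferential (n : ℕ) (lam0 : ℝ) (a : Fin n → ℝ)
    (d : (Fin n → Lam) →ₗ[Lam] (Fin n → Lam)) : Prop :=
  d ∘ₗ d = 0 ∧
    ∀ xi : Fin n → Lam, xi ≠ 0 → d xi ≠ 0 → actA n lam0 a xi < actA n lam0 a (d xi)

/-- A singular decomposition of `(C, d)`: `p + 2r = n` and an orthogonal basis
`α₁,…,α_p, η₁,…,η_r, γ₁,…,γ_r` of `C` over `Λ` with `d αᵢ = 0` and `d ηⱼ = γⱼ`. -/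
def IsSingularDecomposition (n : ℕ) (lam0 : ℝ) (a : Fin n → ℝ)
    (d : (Fin n → Lam) →ₗ[Lam] (Fin n → Lam)) (p r : ℕ)
    (alpha : Fin p → (Fin n → Lam)) (eta gamma : Fin r → (Fin n → Lam)) : Prop :=
  p + 2 * r = n ∧
  IsOrthogonalFamily n lam0 a (Sum.elim alpha (Sum.elim eta gamma)) ∧
  LinearIndependent Lam (Sum.elim alpha (Sum.elim eta gamma)) ∧
  Submodule.span Lam (Set.range (Sum.elim alpha (Sum.elim eta gamma))) = ⊤ ∧
  (∀ i, d (alpha i) = 0) ∧ (∀ j, d (eta j) = gamma j)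

/-- The set of bars `A (γ j) - A (η j)` of a singular decomposition; its infimum is the
minimal bar `β_min` when `r ≥ 1`. -/
def barSet (n : ℕ) (lam0 : ℝ) (a : Fin n → ℝ) {r : ℕ}
    (eta gamma : Fin r → (Fin n → Lam)) : Set ℝ :=
  {t : ℝ | ∃ j : Fin r, actA n lam0 a (gamma j) = actA n lam0 a (eta j) + (t : WithTop ℝ)}

end

/-! For every `ξ`, the gap `A (d ξ) - A ξ` is at least `β_min`: in the orthogonal basis, `d`
kills the `α`- and `γ`-components of `ξ` and sends each `η`-component to the matching
`γ`-component, raising its action by at least `β_min`, and orthogonality turns these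
componentwise bounds into one for `ξ`. The minimal bar is itself a gap, realised by `ξ = η_j`.
Arrow lengths and gaps bound each other from below: an arrow `x̄ → ȳ` gives `d x̄ ≠ 0` with
`A (d x̄) ≤ A ȳ`; conversely the leading term of `d ξ` comes from an arrow `x̄ → ȳ` with `x̄` a
term of `ξ`, so `A ȳ - A x̄ ≤ A (d ξ) - A ξ`. Hence all three sets have least element `β_min`. -/

lemma IsLeast.of_forall_exists_le {α : Type*} [PartialOrder α] {S T : Set α} {b : α}
    (hT : IsLeast T b) (hST : ∀ s ∈ S, ∃ t ∈ T, t ≤ s) (hTS : ∀ t ∈ T, ∃ s ∈ S, s ≤ t) :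
    IsLeast S b := by
  have hlow : b ∈ lowerBounds S := fun s hs =>
    let ⟨_, ht, hts⟩ := hST s hs
    (hT.2 ht).trans hts
  obtain ⟨s, hs, hsb⟩ := hTS b hT.1
  exact ⟨le_antisymm hsb (hlow hs) ▸ hs, hlow⟩

section Action

variable {n : ℕ} {lam0 : ℝ} {a : Fin n → ℝ}

@[simp]
lemma actA_zero : actA n lam0 a 0 = ⊤ := by
  simp [actA]

lemma actA_le_of_ne_zero {xi : Fin n → Lam} {i : Fin n} (h : xi i ≠ 0) :
    actA n lam0 a xi ≤ ((a i + lam0 * (xi i).order : ℝ) : WithTop ℝ) := by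
  classical
  exact (Finset.inf_le (Finset.mem_univ i)).trans_eq (if_neg h)

lemma actA_le_of_coeff_ne_zero (hlam0 : 0 ≤ lam0) {xi : Fin n → Lam} {i : Fin n} {k : ℤ}
    (h : (xi i).coeff k ≠ 0) : actA n lam0 a xi ≤ ((a i + lam0 * k : ℝ) : WithTop ℝ) := by
  have hxi : xi i ≠ 0 := fun h0 => h (by simp [h0])
  refine (actA_le_of_ne_zero hxi).trans (WithTop.coe_le_coe.mpr ?_)
  have hord : ((xi i).order : ℝ) ≤ k := by exact_mod_cast HahnSeries.order_le_of_coeff_ne_zero h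
  gcongr

lemma exists_actA_eq {xi : Fin n → Lam} (h : xi ≠ 0) :
    ∃ i, xi i ≠ 0 ∧ actA n lam0 a xi = ((a i + lam0 * (xi i).order : ℝ) : WithTop ℝ) := by
  classical
  obtain ⟨i0, hi0⟩ := Function.ne_iff.mp h
  obtain ⟨i, -, hi⟩ := Finset.exists_mem_eq_inf Finset.univ ⟨i0, Finset.mem_univ i0⟩
    fun i => if xi i = 0 then (⊤ : WithTop ℝ) else ((a i + lam0 * (xi i).order : ℝ) : WithTop ℝ)
  have hA : actA n lam0 a xi = _ := hi
  by_cases hxi : xi i = 0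
  · have := actA_le_of_ne_zero (lam0 := lam0) (a := a) hi0
    rw [hA, if_pos hxi] at this
    exact absurd this (WithTop.not_top_le_coe _)
  · exact ⟨i, hxi, hA.trans (if_neg hxi)⟩

lemma actA_ne_top {xi : Fin n → Lam} (h : xi ≠ 0) : actA n lam0 a xi ≠ ⊤ := by
  obtain ⟨i, -, hi⟩ := exists_actA_eq (lam0 := lam0) (a := a) h
  exact hi ▸ WithTop.coe_ne_top

lemma actA_smul {c : Lam} (hc : c ≠ 0) (xi : Fin n → Lam) :
    actA n lam0 a (c • xi) = ((lam0 * c.order : ℝ) : WithTop ℝ) + actA n lam0 a xi := by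
  classical
  rw [actA, actA, Finset.apply_inf_eq_inf_comp (((lam0 * c.order : ℝ) : WithTop ℝ) + ·)
    (fun _ _ => Monotone.map_min fun _ _ h => by gcongr) (WithTop.add_top _)]
  refine Finset.inf_congr rfl fun i _ => ?_
  by_cases h : xi i = 0
  · simp [h]
  · simp only [Pi.smul_apply, smul_eq_mul, mul_ne_zero hc h, h, if_false, Function.comp_apply,
      HahnSeries.order_mul hc h]
    norm_cast
    push_cast
    ring

lemma actA_smul_add_le {x y : Fin n → Lam} {β : WithTop ℝ}
    (h : actA n lam0 a x + β ≤ actA n lam0 a y) (c : Lam) :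
    actA n lam0 a (c • x) + β ≤ actA n lam0 a (c • y) := by
  by_cases hc : c = 0
  · simp [hc]
  · rw [actA_smul hc, actA_smul hc, add_assoc]
    gcongr

lemma actA_cappedOrbit (i : Fin n) (k : ℤ) :
    actA n lam0 a (cappedOrbit n i k) = ((a i + lam0 * k : ℝ) : WithTop ℝ) := by
  classical
  have hs : (HahnSeries.single k 1 : Lam) ≠ 0 := HahnSeries.single_ne_zero one_ne_zero
  refine le_antisymm ?_ (Finset.le_inf fun i' _ => ?_)
  · simpa only [cappedOrbit, Pi.single_eq_same, HahnSeries.order_single one_ne_zero] using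
      actA_le_of_ne_zero (lam0 := lam0) (a := a) (xi := cappedOrbit n i k) (i := i)
        (by simp [cappedOrbit, hs])
  · by_cases h : i' = i
    · subst h
      simp [cappedOrbit, hs, HahnSeries.order_single]
    · simp [cappedOrbit, Pi.single_eq_of_ne h]

end Action

section Pairing

variable {n : ℕ} (d : (Fin n → Lam) →ₗ[Lam] (Fin n → Lam))

lemma coeff_apply_cappedOrbit (i j : Fin n) (k l : ℤ) :
    ((d (cappedOrbit n i k)) j).coeff l = pairing n d i j k l := by
  have hx : cappedOrbit n i k = (HahnSeries.single k 1 : Lam) • Pi.single i 1 := by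
    rw [cappedOrbit, ← Pi.single_smul', smul_eq_mul, mul_one]
  rw [hx, map_smul, Pi.smul_apply, smul_eq_mul, pairing, ← sub_add_cancel l k,
    HahnSeries.coeff_single_mul_add, one_mul, add_sub_cancel_right]

lemma exists_pairing_eq_one_of_coeff_ne_zero {xi : Fin n → Lam} {j : Fin n} {l : ℤ}
    (h : ((d xi) j).coeff l ≠ 0) : ∃ i k, (xi i).coeff k ≠ 0 ∧ pairing n d i j k l = 1 := by
  have hsum : ((d xi) j).coeff l = ∑ i, (xi i * (d (Pi.single i 1)) j).coeff l := by
    conv_lhs => rw [pi_eq_sum_univ' xi]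
    simp only [map_sum, map_smul, Finset.sum_apply, Pi.smul_apply, smul_eq_mul,
      HahnSeries.coeff_sum]
  rw [hsum] at h
  obtain ⟨i, -, hi⟩ := Finset.exists_ne_zero_of_sum_ne_zero h
  rw [HahnSeries.coeff_mul] at hi
  obtain ⟨⟨k, m⟩, hkm, -⟩ := Finset.exists_ne_zero_of_sum_ne_zero hi
  obtain ⟨hk, hm, rfl⟩ := Finset.mem_antidiagonal.mp hkm
  -- `ZMod 2` is `Fin 2` by definition.
  refine ⟨i, k, hk, Fin.eq_one_of_ne_zero _ ?_⟩
  rwa [pairing, add_sub_cancel_left]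

end Pairing

section Gaps

variable {n : ℕ} {lam0 : ℝ} {a : Fin n → ℝ} {d : (Fin n → Lam) →ₗ[Lam] (Fin n → Lam)}

lemma exists_mem_actionGaps_le_of_mem_arrowLengths (hlam0 : 0 ≤ lam0) {t : ℝ}
    (ht : t ∈ arrowLengths n lam0 a d) : ∃ s ∈ actionGaps n lam0 a d, s ≤ t := by
  obtain ⟨i, j, k, l, hpair, rfl⟩ := ht
  have hco : ((d (cappedOrbit n i k)) j).coeff l ≠ 0 := by
    rw [coeff_apply_cappedOrbit, hpair]
    exact one_ne_zero
  have hd : d (cappedOrbit n i k) ≠ 0 := fun h0 => hco (by simp [h0])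
  obtain ⟨y, hy⟩ := WithTop.ne_top_iff_exists.mp (actA_ne_top (lam0 := lam0) (a := a) hd)
  refine ⟨y - (a i + lam0 * k), ⟨_, hd, ?_⟩, ?_⟩
  · rw [← hy, actA_cappedOrbit, ← WithTop.coe_add, add_sub_cancel]
  · have hle := hy ▸ actA_le_of_coeff_ne_zero hlam0 hco
    linarith [WithTop.coe_le_coe.mp hle]

lemma exists_mem_arrowLengths_le_of_mem_actionGaps (hlam0 : 0 ≤ lam0) {s : ℝ}
    (hs : s ∈ actionGaps n lam0 a d) : ∃ t ∈ arrowLengths n lam0 a d, t ≤ s := by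
  obtain ⟨xi, hd, hs⟩ := hs
  obtain ⟨j, hj, hA⟩ := exists_actA_eq (lam0 := lam0) (a := a) hd
  obtain ⟨i, k, hk, hpair⟩ :=
    exists_pairing_eq_one_of_coeff_ne_zero d (HahnSeries.coeff_order_eq_zero.not.mpr hj)
  refine ⟨_, ⟨i, j, k, _, hpair, rfl⟩, ?_⟩
  have hle : ((a j + lam0 * ((d xi) j).order : ℝ) : WithTop ℝ)
      ≤ ((a i + lam0 * k + s : ℝ) : WithTop ℝ) := by
    rw [← hA, hs, WithTop.coe_add]
    gcongr
    exact actA_le_of_coeff_ne_zero hlam0 hk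
  linarith [WithTop.coe_le_coe.mp hle]

end Gaps

section Bars

variable {n : ℕ} {lam0 : ℝ} {a : Fin n → ℝ} {r : ℕ} {eta gamma : Fin r → (Fin n → Lam)}

lemma exists_minimalBar [Nonempty (Fin r)] (hη : ∀ j, eta j ≠ 0) (hγ : ∀ j, gamma j ≠ 0) :
    ∃ (j0 : Fin r) (β : ℝ), actA n lam0 a (gamma j0) = actA n lam0 a (eta j0) + β ∧
      ∀ j, actA n lam0 a (eta j) + β ≤ actA n lam0 a (gamma j) := by
  have hbar (j : Fin r) : ∃ t : ℝ, actA n lam0 a (gamma j) = actA n lam0 a (eta j) + t := by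
    obtain ⟨x, hx⟩ := WithTop.ne_top_iff_exists.mp (actA_ne_top (lam0 := lam0) (a := a) (hη j))
    obtain ⟨y, hy⟩ := WithTop.ne_top_iff_exists.mp (actA_ne_top (lam0 := lam0) (a := a) (hγ j))
    exact ⟨y - x, by rw [← hx, ← hy, ← WithTop.coe_add, add_sub_cancel]⟩
  choose T hT using hbar
  obtain ⟨j0, hj0⟩ := Finite.exists_min T
  refine ⟨j0, T j0, hT j0, fun j => ?_⟩
  rw [hT j]
  gcongr
  exact_mod_cast hj0 j

lemma isLeast_barSet (hη : ∀ j, eta j ≠ 0) {j0 : Fin r} {β : ℝ}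
    (hj0 : actA n lam0 a (gamma j0) = actA n lam0 a (eta j0) + β)
    (hβ : ∀ j, actA n lam0 a (eta j) + β ≤ actA n lam0 a (gamma j)) :
    IsLeast (barSet n lam0 a eta gamma) β :=
  ⟨⟨j0, hj0⟩, fun _ ⟨j, ht⟩ => WithTop.coe_le_coe.mp <|
    (WithTop.add_le_add_iff_left (actA_ne_top (hη j))).mp (ht ▸ hβ j)⟩

end Bars

namespace IsSingularDecomposition

variable {n : ℕ} {lam0 : ℝ} {a : Fin n → ℝ} {d : (Fin n → Lam) →ₗ[Lam] (Fin n → Lam)}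
  {p r : ℕ} {alpha : Fin p → (Fin n → Lam)} {eta gamma : Fin r → (Fin n → Lam)}

lemma eta_ne_zero (hdec : IsSingularDecomposition n lam0 a d p r alpha eta gamma) (j : Fin r) :
    eta j ≠ 0 := by
  simpa using hdec.2.2.1.ne_zero (Sum.inr (Sum.inl j))

lemma gamma_ne_zero (hdec : IsSingularDecomposition n lam0 a d p r alpha eta gamma) (j : Fin r) :
    gamma j ≠ 0 := by
  simpa using hdec.2.2.1.ne_zero (Sum.inr (Sum.inr j))

lemma actA_add_le_actA_apply (hdec : IsSingularDecomposition n lam0 a d p r alpha eta gamma)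
    (hd2 : d ∘ₗ d = 0) {β : WithTop ℝ}
    (hβ : ∀ j, actA n lam0 a (eta j) + β ≤ actA n lam0 a (gamma j)) (xi : Fin n → Lam) :
    actA n lam0 a xi + β ≤ actA n lam0 a (d xi) := by
  obtain ⟨-, horth, -, hspan, hα, hη⟩ := hdec
  have hγ (j : Fin r) : d (gamma j) = 0 := by
    rw [← hη j, ← LinearMap.comp_apply, hd2, LinearMap.zero_apply]
  set v := Sum.elim alpha (Sum.elim eta gamma)
  have hxi : xi ∈ Submodule.span Lam (Set.range v) := hspan ▸ Submodule.mem_top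
  obtain ⟨c, rfl⟩ := (Submodule.mem_span_range_iff_exists_fun Lam).mp hxi
  set c' : Fin p ⊕ (Fin r ⊕ Fin r) → Lam := Sum.elim 0 (Sum.elim 0 (c ∘ Sum.inr ∘ Sum.inl))
  have hdsum : d (∑ i, c i • v i) = ∑ i, c' i • v i := by
    simp [v, c', Fintype.sum_sum_type, hα, hη, hγ]
  rw [hdsum, horth c, horth c']
  refine Finset.le_inf fun i _ => ?_
  rcases i with i | j | j
  · simp [c']
  · simp [c']
  · exact (add_le_add_left (Finset.inf_le (Finset.mem_univ (Sum.inr (Sum.inl j)))) β).trans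
      (actA_smul_add_le (hβ j) _)

lemma isLeast_actionGaps (hdec : IsSingularDecomposition n lam0 a d p r alpha eta gamma)
    (hd2 : d ∘ₗ d = 0) {j0 : Fin r} {β : ℝ}
    (hj0 : actA n lam0 a (gamma j0) = actA n lam0 a (eta j0) + β)
    (hβ : ∀ j, actA n lam0 a (eta j) + β ≤ actA n lam0 a (gamma j)) :
    IsLeast (actionGaps n lam0 a d) β := by
  have hdη := hdec.2.2.2.2.2 j0
  refine ⟨⟨eta j0, hdη ▸ hdec.gamma_ne_zero j0, hdη ▸ hj0⟩, ?_⟩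
  rintro s ⟨xi, hd, hs⟩
  have hxi : xi ≠ 0 := by
    rintro rfl
    exact hd (map_zero d)
  exact WithTop.coe_le_coe.mp <| (WithTop.add_le_add_iff_left (actA_ne_top hxi)).mp
    (hs ▸ hdec.actA_add_le_actA_apply hd2 hβ xi)

end IsSingularDecomposition

/-- For a Floer-type differential `d` on `C` with a singular
decomposition with `r ≥ 1`, the minimal bar `β_min` equals the infimum of
`A ȳ - A x̄` over pairs of capped orbits with `⟨d x̄, ȳ⟩ = 1`, and also equals the
infimum of `A (d ξ) - A ξ` over `ξ` with `d ξ ≠ 0`. -/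
theorem minimalBar_eq_sInf (n : ℕ) (lam0 : ℝ) (hlam0 : 0 < lam0) (a : Fin n → ℝ)
    (d : (Fin n → Lam) →ₗ[Lam] (Fin n → Lam))
    (hFloer : IsFloerDifferential n lam0 a d)
    (p r : ℕ) (hr : 1 ≤ r)
    (alpha : Fin p → (Fin n → Lam)) (eta gamma : Fin r → (Fin n → Lam))
    (hdec : IsSingularDecomposition n lam0 a d p r alpha eta gamma) :
    sInf (barSet n lam0 a eta gamma) = sInf (arrowLengths n lam0 a d) ∧
    sInf (barSet n lam0 a eta gamma) = sInf (actionGaps n lam0 a d) := by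
  have : Nonempty (Fin r) := ⟨⟨0, hr⟩⟩
  obtain ⟨j0, β, hj0, hβ⟩ := exists_minimalBar hdec.eta_ne_zero hdec.gamma_ne_zero
  have hbars := isLeast_barSet hdec.eta_ne_zero hj0 hβ
  have hgaps := hdec.isLeast_actionGaps hFloer.1 hj0 hβ
  have harrows : IsLeast (arrowLengths n lam0 a d) β :=
    hgaps.of_forall_exists_le (fun _ => exists_mem_actionGaps_le_of_mem_arrowLengths hlam0.le)
      (fun _ => exists_mem_arrowLengths_le_of_mem_actionGaps hlam0.le)
  exact ⟨hbars.csInf_eq.trans harrows.csInf_eq.symm, hbars.csInf_eq.trans hgaps.csInf_eq.symm⟩
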